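/- Let $F$ be an uncountable closed subset of the unit circle $\mathbb{T} \subset \mathbb{C}$. Then there exists a perfect compact set $K \subseteq F$ such that for every $\alpha \in (0, 1/2)$, the function $z \mapsto (\mathrm{dist}(z,K))^{-\alpha}$ belongs to $L_2(\mathbb{T})$ with respect to normalized Lebesgue (Haar) measure on $\mathbb{T}$. -/

import Mathlib

/-!
Every uncountable closed set contains a nonempty perfect set, and a perfect set can be split
repeatedly into two disjoint perfect pieces as small as we like. Taking the pieces of generation
`n` of diameter at most `2 ^ (-n²)` yields a perfect compact `K ⊆ F` covered by `2 ^ n` balls of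
radius `2 ^ (-n²)` centred on `K`. An arc of the unit circle lying in a ball of radius `r` centred
on the circle has length at most `π r`, so `{z | dist(z, K) ≤ 2 ^ (-n²)}` has measure
`O(2 ^ n 2 ^ (-n²))`. Summing over the layers `2 ^ (-(n+1)²) < dist(z, K) ≤ 2 ^ (-n²)` bounds
`∫ dist(z, K) ^ (-s)` by `∑ 2 ^ (n + s (n+1)² - n²)`, which converges for every `s < 1`, in
particular for `s = 2α`.
-/

open MeasureTheory Set

/-- The normalized Lebesgue (Haar) measure on the unit circle, as a measure on `ℂ`. -/
noncomputable def circleMeasure : Measure ℂ :=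
  (ENNReal.ofReal (2 * Real.pi))⁻¹ •
    Measure.map (fun t : ℝ => Complex.exp (t * Complex.I))
      (volume.restrict (Ioc 0 (2 * Real.pi)))

open Metric Filter Topology ENNReal CantorScheme PiNat

def HasDyadicBallCovers {X : Type*} [PseudoMetricSpace X] (K : Set X) (ε : ℕ → ℝ) : Prop :=
  ∀ n, ∃ c : (Fin n → Bool) → X, (∀ σ, c σ ∈ K) ∧ K ⊆ ⋃ σ, closedBall (c σ) (ε n)

lemma perfect_range_of_injective {Y : Type*} [TopologicalSpace Y] [T2Space Y]
    {f : (ℕ → Bool) → Y} (hf : Continuous f) (hinj : Function.Injective f) : Perfect (range f) := by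
  refine ⟨(isCompact_range hf).isClosed, ?_⟩
  rintro _ ⟨x, rfl⟩
  let u : ℕ → ℕ → Bool := fun n => Function.update x n !(x n)
  have hu : Tendsto u atTop (𝓝 x) := tendsto_pi_nhds.2 fun i => tendsto_const_nhds.congr'
    ((eventually_gt_atTop i).mono fun n hn => (Function.update_of_ne hn.ne _ _).symm)
  have hux (n : ℕ) : u n ≠ x := fun h => by simpa [u] using congrFun h n
  rw [accPt_iff_frequently]
  exact ((hf.tendsto x).comp hu).frequently
    (Frequently.of_forall fun n => ⟨hinj.ne (hux n), mem_range_self _⟩)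

section CantorScheme

variable {X : Type*} [MetricSpace X]

lemma Perfect.exists_cantorScheme {P : Set X} (hP : Perfect P) (hne : P.Nonempty)
    {ε : ℕ → ℝ≥0∞} (hε : ∀ n, 0 < ε n) :
    ∃ D : List Bool → Set X, D [] ⊆ P ∧
      (∀ l, (D l).Nonempty ∧ IsClosed (D l) ∧ ediam (D l) ≤ ε l.length) ∧
      CantorScheme.Antitone D ∧ CantorScheme.Disjoint D := by
  obtain ⟨R, -, ⟨hR, hRne, hRP, hRdiam⟩, -, -⟩ := hP.small_diam_splitting hne (hε 0)
  choose C₀ C₁ h₀ h₁ hdisj using fun (C : {C : Set X // Perfect C ∧ C.Nonempty}) (n : ℕ) =>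
    C.2.1.small_diam_splitting C.2.2 (hε (n + 1))
  let T : List Bool → {C : Set X // Perfect C ∧ C.Nonempty} := fun l =>
    l.rec ⟨R, hR, hRne⟩ fun b l C =>
      cond b ⟨C₁ C l.length, (h₁ C _).1, (h₁ C _).2.1⟩ ⟨C₀ C l.length, (h₀ C _).1, (h₀ C _).2.1⟩
  refine ⟨fun l => (T l).1, hRP, fun l => ⟨(T l).2.2, (T l).2.1.closed, ?_⟩, ?_, ?_⟩
  · rcases l with _ | ⟨_ | _, l⟩
    exacts [hRdiam, (h₀ (T l) _).2.2.2, (h₁ (T l) _).2.2.2]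
  · rintro l (_ | _)
    exacts [(h₀ (T l) _).2.2.1, (h₁ (T l) _).2.2.1]
  · rintro l (_ | _) (_ | _) hab
    exacts [(hab rfl).elim, hdisj (T l) _, (hdisj (T l) _).symm, (hab rfl).elim]

lemma hasDyadicBallCovers_range {f : (ℕ → Bool) → X} {D : List Bool → Set X} {ε : ℕ → ℝ}
    (hε : ∀ n, 0 ≤ ε n) (hfD : ∀ x n, f x ∈ D (res x n))
    (hD : ∀ l, ediam (D l) ≤ ENNReal.ofReal (ε l.length)) : HasDyadicBallCovers (range f) ε := by
  intro n
  let extend : (Fin n → Bool) → ℕ → Bool := fun σ i => if h : i < n then σ ⟨i, h⟩ else false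
  refine ⟨fun σ => f (extend σ), fun σ => mem_range_self _, ?_⟩
  rintro _ ⟨x, rfl⟩
  refine mem_iUnion.2 ⟨fun i => x i, mem_closedBall.2 ?_⟩
  have hres : res (extend fun i => x i) n = res x n := res_eq_res.2 fun m hm => by simp [extend, hm]
  have := (edist_le_ediam_of_mem (hfD x n) (hres ▸ hfD _ n)).trans (hD _)
  rwa [res_length, edist_dist, ofReal_le_ofReal_iff (hε n)] at this

theorem Perfect.exists_subset_hasDyadicBallCovers [CompleteSpace X] {P : Set X} (hP : Perfect P)
    (hne : P.Nonempty) {ε : ℕ → ℝ} (hε : ∀ n, 0 < ε n) (hε0 : Tendsto ε atTop (𝓝 0)) :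
    ∃ K ⊆ P, K.Nonempty ∧ IsCompact K ∧ Perfect K ∧ HasDyadicBallCovers K ε := by
  obtain ⟨D, hDP, hD, hanti, hdisj⟩ := hP.exists_cantorScheme hne fun n => ofReal_pos.2 (hε n)
  have hvan : VanishingDiam D := fun x =>
    tendsto_of_tendsto_of_tendsto_of_le_of_le tendsto_const_nhds
      (by simpa using ENNReal.tendsto_ofReal hε0) (fun _ => bot_le)
      fun n => by simpa [res_length] using (hD (res x n)).2.2
  have hdom : (inducedMap D).1 = univ :=
    (hanti.closureAntitone fun l => (hD l).2.1).map_of_vanishingDiam hvan fun l => (hD l).1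
  let f : (ℕ → Bool) → X := fun x => (inducedMap D).2 ⟨x, hdom ▸ mem_univ x⟩
  have hfD (x : ℕ → Bool) (n : ℕ) : f x ∈ D (res x n) := map_mem _ n
  have hf : Continuous f := hvan.map_continuous.comp (continuous_id.subtype_mk _)
  have hinj : Function.Injective f := fun x y h => by simpa using hdisj.map_injective h
  refine ⟨range f, ?_, range_nonempty f, isCompact_range hf, perfect_range_of_injective hf hinj,
    hasDyadicBallCovers_range (fun n => (hε n).le) hfD fun l => (hD l).2.2⟩
  rintro _ ⟨x, rfl⟩
  exact hDP (hfD x 0)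

end CantorScheme

lemma ofReal_rpow_neg_le_tsum {ε : ℕ → ℝ} (hε : ∀ n, 0 < ε n)
    (hε0 : Tendsto ε atTop (𝓝 0)) {s d : ℝ} (hs : 0 < s) (hd : 0 ≤ d) :
    ENNReal.ofReal (d ^ (-s)) ≤ ENNReal.ofReal (ε 0 ^ (-s)) +
      ∑' n, if d ≤ ε n then ENNReal.ofReal (ε (n + 1) ^ (-s)) else 0 := by
  -- `0 ^ (-s) = 0` in Lean, so the case `d = 0` is trivial.
  rcases hd.eq_or_lt with rfl | hd
  · simp [Real.zero_rpow (neg_ne_zero.2 hs.ne')]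
  by_cases h0 : ε 0 < d
  · exact le_add_right (ofReal_le_ofReal (Real.rpow_le_rpow_of_nonpos (hε 0) h0.le (by linarith)))
  have hex : ∃ m, ε m < d := (hε0.eventually (gt_mem_nhds hd)).exists
  obtain ⟨n, hn⟩ : ∃ n, Nat.find hex = n + 1 :=
    Nat.exists_eq_succ_of_ne_zero fun h => h0 (h ▸ Nat.find_spec hex)
  have hlt : ε (n + 1) < d := hn ▸ Nat.find_spec hex
  have hle : d ≤ ε n := not_lt.1 (Nat.find_min hex (by omega))
  refine le_add_left ((ENNReal.le_tsum n).trans' ?_)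
  rw [if_pos hle]
  exact ofReal_le_ofReal (Real.rpow_le_rpow_of_nonpos (hε _) hlt.le (by linarith))

theorem memLp_two_rpow_of_lintegral_lt_top {X : Type*} [MeasurableSpace X] {μ : Measure X}
    {f : X → ℝ} (hf : Measurable f) (hf0 : 0 ≤ f) {β : ℝ}
    (h : ∫⁻ z, ENNReal.ofReal (f z ^ (2 * β)) ∂μ < ∞) : MemLp (fun z => f z ^ β) 2 μ := by
  have hm : Measurable fun z => f z ^ β := hf.pow_const β
  have hsq (z : X) : (f z ^ β) ^ 2 = f z ^ (2 * β) := by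
    rw [← Real.rpow_natCast, ← Real.rpow_mul (hf0 z), mul_comm]
    norm_num
  rw [memLp_two_iff_integrable_sq hm.aestronglyMeasurable]
  refine ⟨(hm.pow_const 2).aestronglyMeasurable, ?_⟩
  rw [hasFiniteIntegral_iff_ofReal (ae_of_all _ fun z => sq_nonneg _)]
  simpa only [hsq] using h

section InfDistIntegral

variable {X : Type*} [PseudoMetricSpace X] [MeasurableSpace X] {μ : Measure X} {K : Set X}
  {A : ℝ≥0∞}

lemma measure_setOf_infDist_le_le (hball : ∀ x ∈ K, ∀ r, μ (closedBall x r) ≤ A * ENNReal.ofReal r)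
    {ι : Type*} [Fintype ι] [Nonempty ι] {c : ι → X} (hcK : ∀ i, c i ∈ K) {r : ℝ} (hr : 0 < r)
    (hcov : K ⊆ ⋃ i, closedBall (c i) r) :
    μ {z | infDist z K ≤ r} ≤ Fintype.card ι * (A * ENNReal.ofReal (3 * r)) := by
  have hK : K.Nonempty := ⟨_, hcK (Classical.arbitrary ι)⟩
  have hsub : {z | infDist z K ≤ r} ⊆ ⋃ i, closedBall (c i) (3 * r) := by
    intro z hz
    obtain ⟨y, hyK, hzy⟩ := (infDist_lt_iff hK).1 (lt_of_le_of_lt hz (by linarith : r < 2 * r))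
    obtain ⟨i, hi⟩ := mem_iUnion.1 (hcov hyK)
    refine mem_iUnion.2 ⟨i, mem_closedBall.2 ?_⟩
    linarith [dist_triangle z y (c i), mem_closedBall.1 hi]
  calc μ {z | infDist z K ≤ r} ≤ ∑ i, μ (closedBall (c i) (3 * r)) :=
        (measure_mono hsub).trans (measure_iUnion_fintype_le _ _)
    _ ≤ ∑ _i : ι, A * ENNReal.ofReal (3 * r) := Finset.sum_le_sum fun i _ => hball _ (hcK i) _
    _ = Fintype.card ι * (A * ENNReal.ofReal (3 * r)) := by
        rw [Finset.sum_const, nsmul_eq_mul, Finset.card_univ]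

variable [OpensMeasurableSpace X]

theorem lintegral_ofReal_infDist_rpow_neg_lt_top [IsFiniteMeasure μ] (hA : A ≠ ∞)
    (hball : ∀ x ∈ K, ∀ r, μ (closedBall x r) ≤ A * ENNReal.ofReal r) {ε : ℕ → ℝ}
    (hε : ∀ n, 0 < ε n) (hε0 : Tendsto ε atTop (𝓝 0)) (hK : HasDyadicBallCovers K ε) {s : ℝ}
    (hs : 0 < s) (hsum : Summable fun n => 2 ^ n * (ε (n + 1) ^ (-s) * ε n)) :
    ∫⁻ z, ENNReal.ofReal (infDist z K ^ (-s)) ∂μ < ∞ := by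
  have hlevel (n : ℕ) : μ {z | infDist z K ≤ ε n} ≤ 2 ^ n * (A * ENNReal.ofReal (3 * ε n)) := by
    obtain ⟨c, hcK, hcov⟩ := hK n
    simpa using measure_setOf_infDist_le_le hball hcK (hε n) hcov
  have hmeas (n : ℕ) : MeasurableSet {z | infDist z K ≤ ε n} :=
    measurableSet_le (continuous_infDist_pt K).measurable measurable_const
  have hpow (n : ℕ) : 0 ≤ ε (n + 1) ^ (-s) := Real.rpow_nonneg (hε _).le _
  calc ∫⁻ z, ENNReal.ofReal (infDist z K ^ (-s)) ∂μ
      ≤ ∫⁻ z, (ENNReal.ofReal (ε 0 ^ (-s)) + ∑' n, {z | infDist z K ≤ ε n}.indicator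
          (fun _ => ENNReal.ofReal (ε (n + 1) ^ (-s))) z) ∂μ := lintegral_mono fun z => by
        simpa only [indicator_apply, mem_ofPred_eq] using
          ofReal_rpow_neg_le_tsum hε hε0 hs infDist_nonneg
    _ = ENNReal.ofReal (ε 0 ^ (-s)) * μ univ +
          ∑' n, ENNReal.ofReal (ε (n + 1) ^ (-s)) * μ {z | infDist z K ≤ ε n} := by
        rw [lintegral_add_left measurable_const, lintegral_const,
          lintegral_tsum fun n => aemeasurable_const.indicator (hmeas n)]
        simp_rw [lintegral_indicator_const (hmeas _)]
    _ ≤ ENNReal.ofReal (ε 0 ^ (-s)) * μ univ +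
          ∑' n, ENNReal.ofReal (ε (n + 1) ^ (-s)) * (2 ^ n * (A * ENNReal.ofReal (3 * ε n))) := by
        gcongr with n
        exact hlevel n
    _ = ENNReal.ofReal (ε 0 ^ (-s)) * μ univ +
          3 * A * ∑' n, ENNReal.ofReal (2 ^ n * (ε (n + 1) ^ (-s) * ε n)) := by
        rw [← ENNReal.tsum_mul_left]
        refine congrArg _ (tsum_congr fun n => ?_)
        have := (hε n).le
        have := hpow n
        rw [ENNReal.ofReal_mul (by positivity), ENNReal.ofReal_mul (by positivity),
          ENNReal.ofReal_mul (by positivity), ENNReal.ofReal_pow zero_le_two,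
          ENNReal.ofReal_ofNat, ENNReal.ofReal_ofNat]
        ring
    _ < ∞ := by
        have hnonneg (n : ℕ) : 0 ≤ 2 ^ n * (ε (n + 1) ^ (-s) * ε n) := by
          have := (hε n).le
          have := hpow n
          positivity
        rw [← ENNReal.ofReal_tsum_of_nonneg hnonneg hsum]
        exact add_lt_top.2 ⟨mul_lt_top ofReal_lt_top (measure_lt_top μ univ),
          mul_lt_top (mul_lt_top (by norm_num) hA.lt_top) ofReal_lt_top⟩

end InfDistIntegral

noncomputable def twoPowNegSq (n : ℕ) : ℝ := 2 ^ (-(n ^ 2 : ℕ) : ℝ)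

lemma twoPowNegSq_pos (n : ℕ) : 0 < twoPowNegSq n := by
  unfold twoPowNegSq; positivity

lemma tendsto_twoPowNegSq : Tendsto twoPowNegSq atTop (𝓝 0) := by
  refine squeeze_zero (fun n => (twoPowNegSq_pos n).le) (fun n => ?_)
    (tendsto_pow_atTop_nhds_zero_of_lt_one (by norm_num : (0 : ℝ) ≤ 2⁻¹) (by norm_num))
  rw [twoPowNegSq, inv_pow, ← Real.rpow_natCast, ← Real.rpow_neg zero_le_two]
  refine Real.rpow_le_rpow_of_exponent_le one_le_two (neg_le_neg ?_)
  exact_mod_cast Nat.le_self_pow two_ne_zero n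

lemma summable_twoPowNegSq {s : ℝ} (hs : s < 1) :
    Summable fun n => 2 ^ n * (twoPowNegSq (n + 1) ^ (-s) * twoPowNegSq n) := by
  have h2 : (0 : ℝ) < 2 := two_pos
  have ha : 0 < 1 - s := sub_pos.2 hs
  refine Summable.of_nonneg_of_le (fun n => ?_) (fun n => ?_)
    ((summable_geometric_two).mul_left (2 ^ (4 / (1 - s))))
  · have := twoPowNegSq_pos n
    have := Real.rpow_nonneg (twoPowNegSq_pos (n + 1)).le (-s)
    positivity
  have hterm : 2 ^ n * (twoPowNegSq (n + 1) ^ (-s) * twoPowNegSq n) =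
      (2 : ℝ) ^ (n + s * (n + 1) ^ 2 - n ^ 2 : ℝ) := by
    rw [twoPowNegSq, twoPowNegSq, ← Real.rpow_mul h2.le, ← Real.rpow_natCast,
      ← Real.rpow_add h2, ← Real.rpow_add h2]
    push_cast
    ring_nf
  have hgeom : 2 ^ (4 / (1 - s)) * (1 / 2) ^ n = (2 : ℝ) ^ (4 / (1 - s) - n) := by
    rw [Real.rpow_sub h2, Real.rpow_natCast, one_div, inv_pow, ← div_eq_mul_inv]
  rw [hterm, hgeom]
  refine Real.rpow_le_rpow_of_exponent_le one_le_two ?_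
  have : 4 * (n + 1) - (1 - s) * (n + 1) ^ 2 ≤ 4 / (1 - s) := by
    rw [le_div_iff₀ ha]
    nlinarith [sq_nonneg ((1 - s) * (n + 1) - 2)]
  nlinarith

section Circle

open Real

lemma mul_abs_le_norm_exp_mul_I_sub_one {x : ℝ} (hx : |x| ≤ π) :
    2 / π * |x| ≤ ‖Complex.exp (x * Complex.I) - 1‖ := by
  rw [mul_comm (x : ℂ), Complex.norm_exp_I_mul_ofReal_sub_one, norm_mul, Real.norm_eq_abs,
    Real.norm_eq_abs, abs_two]
  have := mul_abs_le_abs_sin (x := x / 2) (by rw [abs_div, abs_two]; linarith)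
  rw [abs_div, abs_two] at this
  linarith

lemma mul_abs_sub_le_dist_exp_mul_I {t θ : ℝ} (h : |t - θ| ≤ π) :
    2 / π * |t - θ| ≤ dist (Complex.exp (t * Complex.I)) (Complex.exp (θ * Complex.I)) := by
  have hfac : Complex.exp (t * Complex.I) - Complex.exp (θ * Complex.I) =
      Complex.exp (θ * Complex.I) * (Complex.exp (↑(t - θ) * Complex.I) - 1) := by
    rw [mul_sub, mul_one, ← Complex.exp_add]; push_cast; ring_nf
  rw [dist_eq_norm, hfac, norm_mul, Complex.norm_exp_ofReal_mul_I, one_mul]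
  exact mul_abs_le_norm_exp_mul_I_sub_one h

-- Both sides are the pushforward of the Haar measure of `AddCircle (2 * π)` along `toCircle`.
lemma map_exp_restrict_Ioc_eq (a : ℝ) :
    Measure.map (fun t : ℝ => Complex.exp (t * Complex.I)) (volume.restrict (Ioc 0 (2 * π))) =
      Measure.map (fun t : ℝ => Complex.exp (t * Complex.I))
        (volume.restrict (Ioc a (a + 2 * π))) := by
  have : Fact (0 < 2 * π) := ⟨two_pi_pos⟩
  have hfac : (fun t : ℝ => Complex.exp (t * Complex.I)) =
      (fun y : AddCircle (2 * π) => (y.toCircle : ℂ)) ∘ ((↑) : ℝ → AddCircle (2 * π)) := by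
    ext t
    simp [AddCircle.toCircle_apply_mk, Circle.coe_exp, two_pi_pos.ne']
  have hg : Measurable fun y : AddCircle (2 * π) => (y.toCircle : ℂ) :=
    (continuous_subtype_val.comp AddCircle.continuous_toCircle).measurable
  rw [hfac, ← Measure.map_map hg (AddCircle.measurePreserving_mk _ a).measurable,
    ← Measure.map_map hg (by simpa using (AddCircle.measurePreserving_mk (2 * π) 0).measurable),
    (AddCircle.measurePreserving_mk _ a).map_eq]
  simpa using congrArg (Measure.map _) (AddCircle.measurePreserving_mk (2 * π) 0).map_eq

lemma circleMeasure_closedBall_le {w : ℂ} (hw : w ∈ sphere (0 : ℂ) 1) (r : ℝ) :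
    circleMeasure (closedBall w r) ≤ 2⁻¹ * ENNReal.ofReal r := by
  obtain ⟨θ, rfl⟩ := (Complex.norm_eq_one_iff w).1 (mem_sphere_zero_iff_norm.1 hw)
  have harc : (fun t : ℝ => Complex.exp (t * Complex.I)) ⁻¹'
      closedBall (Complex.exp (θ * Complex.I)) r ∩ Ioc (θ - π) (θ - π + 2 * π) ⊆
        Icc (θ - π / 2 * r) (θ + π / 2 * r) := by
    rintro t ⟨hdist, hlo, hhi⟩
    have hle : |t - θ| ≤ π := abs_le.2 ⟨by linarith, by linarith⟩
    have := (mul_abs_sub_le_dist_exp_mul_I hle).trans (mem_closedBall.1 hdist)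
    have h' : |t - θ| ≤ π / 2 * r := by
      rw [div_mul_eq_mul_div, div_le_iff₀ pi_pos] at this
      linarith
    exact ⟨by linarith [neg_abs_le (t - θ)], by linarith [le_abs_self (t - θ)]⟩
  calc circleMeasure (closedBall (Complex.exp (θ * Complex.I)) r)
      ≤ (ENNReal.ofReal (2 * π))⁻¹ * volume (Icc (θ - π / 2 * r) (θ + π / 2 * r)) := by
        rw [circleMeasure, map_exp_restrict_Ioc_eq (θ - π), Measure.smul_apply, smul_eq_mul,
          Measure.map_apply (by fun_prop) measurableSet_closedBall,
          Measure.restrict_apply (measurableSet_closedBall.preimage (by fun_prop))]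
        gcongr
    _ = 2⁻¹ * ENNReal.ofReal r := by
        rw [Real.volume_Icc, ← ENNReal.ofReal_inv_of_pos two_pi_pos,
          ← ENNReal.ofReal_mul (by positivity), ← ENNReal.ofReal_ofNat 2,
          ← ENNReal.ofReal_inv_of_pos two_pos, ← ENNReal.ofReal_mul (by norm_num)]
        congr 1
        field_simp
        ring

instance : IsFiniteMeasure circleMeasure :=
  Measure.smul_finite _ (by simp [Real.pi_pos])

end Circle

theorem stmt_1 (F : Set ℂ) (hFsub : F ⊆ Metric.sphere (0:ℂ) 1)
    (hFclosed : IsClosed F) (hFunc : ¬ F.Countable) :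
    ∃ K : Set ℂ, K ⊆ F ∧ K.Nonempty ∧ IsCompact K ∧ Perfect K ∧
      ∀ α : ℝ, α ∈ Ioo (0:ℝ) (1/2) →
        MemLp (fun z : ℂ => (Metric.infDist z K) ^ (-α)) 2 circleMeasure := by
  obtain ⟨P, hP, hPne, hPF⟩ := exists_perfect_nonempty_of_isClosed_of_not_countable hFclosed hFunc
  obtain ⟨K, hKP, hKne, hKc, hKp, hKcov⟩ :=
    hP.exists_subset_hasDyadicBallCovers hPne twoPowNegSq_pos tendsto_twoPowNegSq
  refine ⟨K, hKP.trans hPF, hKne, hKc, hKp, fun α ⟨hα0, hα1⟩ => ?_⟩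
  have hball (x : ℂ) (hx : x ∈ K) (r : ℝ) :
      circleMeasure (closedBall x r) ≤ 2⁻¹ * ENNReal.ofReal r :=
    circleMeasure_closedBall_le (hFsub (hPF (hKP hx))) r
  refine memLp_two_rpow_of_lintegral_lt_top (continuous_infDist_pt K).measurable
    (fun _ => infDist_nonneg) ?_
  rw [mul_neg]
  exact lintegral_ofReal_infDist_rpow_neg_lt_top (by norm_num) hball twoPowNegSq_pos
    tendsto_twoPowNegSq hKcov (by linarith) (summable_twoPowNegSq (by linarith))
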